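/- arXiv:2303.01215 — 2 statements merged into one kernel-verified Lean document; each statement's English description precedes it below -/
import Mathlib

section
/- Let L : ℝ^d → ℝ be twice continuously differentiable with ‖∇²L(θ)‖ ≤ ρ₂ for all θ ∈ ℝ^d. Let u : [0, ∞) → ℝ^d be differentiable with u'(t) = −∇L(u(t)) for all t ≥ 0, and suppose G := sup_{t≥0} ‖∇L(u(t))‖ is finite. Let η > 0, α > 0, and let H be a natural number with Hη ≤ α. Define gradient descent iterates ũ_{t+1} = ũ_t − η∇L(ũ_t) for 0 ≤ t < H. Then for all 0 ≤ t ≤ H: ‖ũ_t − u(tη)‖ ≤ e^{αρ₂}‖ũ_0 − u(0)‖ + e^{αρ₂} η G. -/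
/-!
The error `eₜ = ‖ũₜ − u(tη)‖` satisfies `eₜ₊₁ ≤ (1 + ηρ₂) eₜ + ρ₂ G η²`: the Euler step from
`ũₜ` and the one from `u(tη)` differ by at most `(1 + ηρ₂) eₜ` since `∇L` is `ρ₂`-Lipschitz, and
the Euler step from `u(tη)` misses `u((t+1)η)` by at most `ρ₂ G η²`, because along the flow
`∇L(u(s))` drifts by at most `ρ₂ G (s − tη)`. Unrolling this recursion gives
`eₜ + ηG ≤ (1 + ηρ₂)ᵗ (e₀ + ηG) ≤ e^{tηρ₂} (e₀ + ηG)`.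
-/

open Set

noncomputable section

theorem ContDiff.differentiable_gradient {F : Type*} [NormedAddCommGroup F]
    [InnerProductSpace ℝ F] [CompleteSpace F] {f : F → ℝ} (hf : ContDiff ℝ 2 f) :
    Differentiable ℝ (gradient f) :=
  ((InnerProductSpace.toDual ℝ F).symm.contDiff.comp
    (hf.fderiv_right (m := 1) (by norm_num))).differentiable one_ne_zero

theorem norm_gradient_sub_le_of_norm_fderiv_gradient_le {F : Type*} [NormedAddCommGroup F]
    [InnerProductSpace ℝ F] [CompleteSpace F] {f : F → ℝ} (hf : ContDiff ℝ 2 f) {ρ : ℝ}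
    (hρ : ∀ x, ‖fderiv ℝ (gradient f) x‖ ≤ ρ) (x y : F) :
    ‖gradient f x - gradient f y‖ ≤ ρ * ‖x - y‖ :=
  convex_univ.norm_image_sub_le_of_norm_fderiv_le (fun z _ => hf.differentiable_gradient z)
    (fun z _ => hρ z) (mem_univ y) (mem_univ x)

section EulerStep

variable {E : Type*} [NormedAddCommGroup E] [NormedSpace ℝ E] {V : E → E} {u : ℝ → E}
  {ρ G a η : ℝ}

theorem norm_flow_sub_eulerStep_le (hη : 0 ≤ η) (hρ : 0 ≤ ρ)
    (hV : ∀ x y, ‖V x - V y‖ ≤ ρ * ‖x - y‖)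
    (hu : ∀ s ∈ Icc a (a + η), HasDerivAt u (-V (u s)) s)
    (hG : ∀ s ∈ Icc a (a + η), ‖V (u s)‖ ≤ G) :
    ‖u (a + η) - (u a - η • V (u a))‖ ≤ ρ * G * η ^ 2 := by
  have ha : a ∈ Icc a (a + η) := left_mem_Icc.2 (by linarith)
  have hb : a + η ∈ Icc a (a + η) := right_mem_Icc.2 (by linarith)
  have hG0 : 0 ≤ G := (norm_nonneg _).trans (hG a ha)
  have hdrift : ∀ s ∈ Icc a (a + η), ‖u s - u a‖ ≤ G * (s - a) :=
    norm_image_sub_le_of_norm_deriv_le_segment' (fun s hs => (hu s hs).hasDerivWithinAt)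
      fun s hs => by simpa using hG s (Ico_subset_Icc_self hs)
  -- `s ↦ u s + (s - a) • V (u a)` has derivative `V (u a) - V (u s)`, which the drift controls.
  have hφ : ∀ s ∈ Icc a (a + η), HasDerivWithinAt (fun s => u s + (s - a) • V (u a))
      (V (u a) - V (u s)) (Icc a (a + η)) s := by
    intro s hs
    refine ((hu s hs).add (((hasDerivAt_id s).sub_const a).smul_const (V (u a)))
      ).hasDerivWithinAt.congr_deriv ?_
    rw [one_smul, neg_add_eq_sub]
  have hφ' : ∀ s ∈ Ico a (a + η), ‖V (u a) - V (u s)‖ ≤ ρ * G * η := by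
    intro s hs
    have hs' := Ico_subset_Icc_self hs
    calc ‖V (u a) - V (u s)‖ ≤ ρ * ‖u s - u a‖ := by rw [norm_sub_rev]; exact hV _ _
      _ ≤ ρ * (G * (s - a)) := mul_le_mul_of_nonneg_left (hdrift s hs') hρ
      _ ≤ ρ * G * η := by nlinarith [mul_nonneg hρ hG0, hs.2]
  have := norm_image_sub_le_of_norm_deriv_le_segment' hφ hφ' (a + η) hb
  calc ‖u (a + η) - (u a - η • V (u a))‖
      = ‖u (a + η) + (a + η - a) • V (u a) - (u a + (a - a) • V (u a))‖ := by
        congr 1; simp only [add_sub_cancel_left, sub_self, zero_smul]; abel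
    _ ≤ ρ * G * η * (a + η - a) := this
    _ = ρ * G * η ^ 2 := by ring

theorem norm_eulerStep_sub_flow_le (hη : 0 ≤ η) (hρ : 0 ≤ ρ)
    (hV : ∀ x y, ‖V x - V y‖ ≤ ρ * ‖x - y‖)
    (hu : ∀ s ∈ Icc a (a + η), HasDerivAt u (-V (u s)) s)
    (hG : ∀ s ∈ Icc a (a + η), ‖V (u s)‖ ≤ G) (x : E) :
    ‖x - η • V x - u (a + η)‖ ≤ (1 + η * ρ) * ‖x - u a‖ + ρ * G * η ^ 2 :=
  calc ‖x - η • V x - u (a + η)‖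
      = ‖(x - u a - η • (V x - V (u a))) - (u (a + η) - (u a - η • V (u a)))‖ := by
        congr 1; module
    _ ≤ ‖x - u a‖ + η * (ρ * ‖x - u a‖) + ρ * G * η ^ 2 := by
        refine (norm_sub_le _ _).trans (add_le_add ((norm_sub_le _ _).trans ?_)
          (norm_flow_sub_eulerStep_le hη hρ hV hu hG))
        rw [norm_smul, Real.norm_of_nonneg hη]
        exact add_le_add_right (mul_le_mul_of_nonneg_left (hV _ _) hη) _
    _ = (1 + η * ρ) * ‖x - u a‖ + ρ * G * η ^ 2 := by ring

end EulerStep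

theorem add_le_one_add_pow_mul_of_le_one_add_mul_add {e : ℕ → ℝ} {δ K : ℝ} {H : ℕ}
    (hδ : 0 ≤ δ) (he : ∀ t < H, e (t + 1) ≤ (1 + δ) * e t + δ * K) :
    ∀ t ≤ H, e t + K ≤ (1 + δ) ^ t * (e 0 + K) := fun t ht =>
  le_geom (u := fun t => e t + K) (by linarith) t fun k hk => by
    linarith [he k (by omega)]

theorem one_add_pow_le_exp_mul {δ : ℝ} (hδ : 0 ≤ δ) (t : ℕ) :
    (1 + δ) ^ t ≤ Real.exp (t * δ) := by
  rw [Real.exp_nat_mul]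
  exact pow_le_pow_left₀ (by linarith) (by linarith [Real.add_one_le_exp δ]) t

theorem statement5_general {d : ℕ} (L : EuclideanSpace ℝ (Fin d) → ℝ) (hL : ContDiff ℝ 2 L)
    (ρ₂ : ℝ) (hHess : ∀ θ, ‖fderiv ℝ (gradient L) θ‖ ≤ ρ₂)
    (u : ℝ → EuclideanSpace ℝ (Fin d))
    (hflow : ∀ t : ℝ, 0 ≤ t → HasDerivAt u (-gradient L (u t)) t)
    (G : ℝ) (hG : ∀ t : ℝ, 0 ≤ t → ‖gradient L (u t)‖ ≤ G)
    (η α : ℝ) (hη : 0 < η)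
    (H : ℕ) (hHη : (H : ℝ) * η ≤ α)
    (ut : ℕ → EuclideanSpace ℝ (Fin d))
    (hrec : ∀ t < H, ut (t + 1) = ut t - η • gradient L (ut t)) :
    ∀ t ≤ H, ‖ut t - u (t * η)‖ ≤
      Real.exp (α * ρ₂) * ‖ut 0 - u 0‖ + Real.exp (α * ρ₂) * η * G := by
  have hρ₂ : 0 ≤ ρ₂ := (norm_nonneg _).trans (hHess 0)
  have hG0 : 0 ≤ G := (norm_nonneg _).trans (hG 0 le_rfl)
  have hLip := norm_gradient_sub_le_of_norm_fderiv_gradient_le hL hHess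
  have hstep : ∀ t < H, ‖ut (t + 1) - u ((t + 1 : ℕ) * η)‖ ≤
      (1 + η * ρ₂) * ‖ut t - u (t * η)‖ + η * ρ₂ * (η * G) := by
    intro t ht
    have hnonneg : ∀ s ∈ Icc ((t : ℝ) * η) (t * η + η), 0 ≤ s := fun s hs =>
      (by positivity : (0 : ℝ) ≤ t * η).trans hs.1
    have := norm_eulerStep_sub_flow_le hη.le hρ₂ hLip (fun s hs => hflow s (hnonneg s hs))
      (fun s hs => hG s (hnonneg s hs)) (ut t)
    rw [hrec t ht, Nat.cast_succ, add_one_mul]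
    linarith
  intro t ht
  have hgronwall := add_le_one_add_pow_mul_of_le_one_add_mul_add
    (e := fun t => ‖ut t - u (t * η)‖) (mul_nonneg hη.le hρ₂) hstep t ht
  have hexp : (1 + η * ρ₂) ^ t ≤ Real.exp (α * ρ₂) :=
    (one_add_pow_le_exp_mul (mul_nonneg hη.le hρ₂) t).trans <| Real.exp_le_exp.2 <| by
      rw [← mul_assoc]
      exact mul_le_mul_of_nonneg_right
        ((mul_le_mul_of_nonneg_right (Nat.cast_le.2 ht) hη.le).trans hHη) hρ₂
  simp only [Nat.cast_zero, zero_mul] at hgronwall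
  calc ‖ut t - u (t * η)‖ ≤ (1 + η * ρ₂) ^ t * (‖ut 0 - u 0‖ + η * G) := by
        linarith [mul_nonneg hη.le hG0]
    _ ≤ Real.exp (α * ρ₂) * (‖ut 0 - u 0‖ + η * G) := by gcongr
    _ = Real.exp (α * ρ₂) * ‖ut 0 - u 0‖ + Real.exp (α * ρ₂) * η * G := by ring

/-- Gradient descent tracks the gradient flow for one round.
If `L` is `C²` with global Hessian bound `ρ₂`, `u` is a gradient flow of `L` on `[0,∞)`
with `‖∇L(u(t))‖ ≤ G` for all `t ≥ 0`, and `ũ` are gradient-descent iterates with step `η`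
performing `H ≤ α/η` steps, then `‖ũ_t − u(tη)‖ ≤ e^{αρ₂}‖ũ₀ − u(0)‖ + e^{αρ₂} η G`
for all `0 ≤ t ≤ H`. -/
theorem statement5 {d : ℕ} (L : EuclideanSpace ℝ (Fin d) → ℝ) (hL : ContDiff ℝ 2 L)
    (ρ₂ : ℝ) (hHess : ∀ θ, ‖fderiv ℝ (gradient L) θ‖ ≤ ρ₂)
    (u : ℝ → EuclideanSpace ℝ (Fin d))
    (hflow : ∀ t : ℝ, 0 ≤ t → HasDerivAt u (-gradient L (u t)) t)
    (G : ℝ) (hG : ∀ t : ℝ, 0 ≤ t → ‖gradient L (u t)‖ ≤ G)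
    (η α : ℝ) (hη : 0 < η) (hα : 0 < α)
    (H : ℕ) (hHη : (H : ℝ) * η ≤ α)
    (ut : ℕ → EuclideanSpace ℝ (Fin d))
    (hrec : ∀ t < H, ut (t + 1) = ut t - η • gradient L (ut t)) :
    ∀ t ≤ H, ‖ut t - u (t * η)‖ ≤
      Real.exp (α * ρ₂) * ‖ut 0 - u 0‖ + Real.exp (α * ρ₂) * η * G :=
  statement5_general L hL ρ₂ hHess u hflow G hG η α hη H hHη ut hrec
end
end

section
/- (Uniform bound on products of gradient-descent linearization matrices.) Let L : ℝ^d → ℝ be three times continuously differentiable with ‖∇²L(θ)‖ ≤ ρ₂ and ‖∇³L(θ)‖ ≤ ρ₃ for all θ ∈ ℝ^d, and let S, μ, L*, ε₀ < ε₁ < ε₂ < ε₃, U = S^{ε₃} satisfy the minimizer-set assumption with the stated radius inequalities. Let 0 < η ≤ 1/ρ₂, let H ∈ ℕ be arbitrary, and let ũ_{t+1} = ũ_t − η∇L(ũ_t) be gradient-descent iterates with dist(ũ_0, S) < ε₀. Then there exist constants C > 0 and η₀ > 0, depending only on μ, ρ₂, ρ₃ and ε₀ and independent of η, H (and hence of α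 = Hη), such that for all 0 < η ≤ η₀ and all 0 ≤ τ < t ≤ H: ‖∏_{l=τ+1}^{t−1} (I − η∇²L(ũ_l))‖ ≤ C. -/
/-!
Gradient descent started near the minimizer set stays in the region where `L` is PL, and the
Łojasiewicz argument bounds its length: a step of length `η ‖∇L‖` lowers `√(L - L*)` by at least
`√(μ / 8) η ‖∇L‖`. So the iterates `u l` converge to a point `a` with
`‖u l - a‖ ≲ √(L (u l) - L*)`, and `a` is a local minimum. There `∇²L a` is positive
semidefinite, so `‖I - η ∇²L a‖ ≤ 1`, and since the Hessian is `ρ₃`-Lipschitz every factor of the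
product has norm at most `exp (η ρ₃ ‖u l - a‖)`. Finally the PL inequality turns the same
telescoping into `∑ η √(L (u l) - L*) ≤ (2 / μ) √(L (u 0) - L*)`, a bound that involves neither
`η` nor the number of steps.
-/

noncomputable section

/-- The ordered product `A_{b-1} * A_{b-2} * ⋯ * A_a` of continuous linear maps
(the identity when `b ≤ a`); applied to a vector it applies `A_a` first. -/
noncomputable def clmProd {d : ℕ}
    (A : ℕ → (EuclideanSpace ℝ (Fin d) →L[ℝ] EuclideanSpace ℝ (Fin d)))
    (a b : ℕ) : EuclideanSpace ℝ (Fin d) →L[ℝ] EuclideanSpace ℝ (Fin d) :=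
  ((List.range (b - a)).map (fun i => A (b - 1 - i))).prod

open scoped RealInnerProductSpace Gradient
open InnerProductSpace Metric Filter Topology

section clmProd

variable {d : ℕ} (A : ℕ → (EuclideanSpace ℝ (Fin d) →L[ℝ] EuclideanSpace ℝ (Fin d)))

theorem clmProd_self (a : ℕ) : clmProd A a a = 1 := by
  simp [clmProd]

theorem clmProd_succ {a b : ℕ} (h : a ≤ b) : clmProd A a (b + 1) = A b * clmProd A a b := by
  rw [clmProd, clmProd, show b + 1 - a = b - a + 1 by omega, List.range_succ_eq_map]
  simp only [List.map_cons, List.map_map, List.prod_cons, Nat.add_sub_cancel, Nat.sub_zero]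
  congr 2
  exact List.map_congr_left fun i _ => by simp only [Function.comp_apply]; congr 1; omega

theorem norm_clmProd_le_exp_sum {a b : ℕ} (hab : a ≤ b) {c : ℕ → ℝ}
    (hA : ∀ l, ‖A l‖ ≤ Real.exp (c l)) :
    ‖clmProd A a b‖ ≤ Real.exp (∑ l ∈ Finset.Ico a b, c l) := by
  induction b, hab using Nat.le_induction with
  | base =>
    rw [clmProd_self, Finset.Ico_self, Finset.sum_empty, Real.exp_zero]
    exact ContinuousLinearMap.norm_id_le
  | succ b hab ih =>
    rw [clmProd_succ A hab, Finset.sum_Ico_succ_top hab, Real.exp_add, mul_comm (Real.exp _)]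
    exact (norm_mul_le _ _).trans
      (mul_le_mul (hA b) ih (norm_nonneg _) (Real.exp_nonneg _))

end clmProd

section LineDerivatives

variable {E : Type*} [NormedAddCommGroup E] [NormedSpace ℝ E]

theorem hasDerivAt_comp_add_smul {F : Type*} [NormedAddCommGroup F] [NormedSpace ℝ F]
    {f : E → F} {x v : E} {s : ℝ} (hf : DifferentiableAt ℝ f (x + s • v)) :
    HasDerivAt (fun s : ℝ => f (x + s • v)) (fderiv ℝ f (x + s • v) v) s :=
  hf.hasFDerivAt.comp_hasDerivAt s (by simpa using ((hasDerivAt_id s).smul_const v).const_add x)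

theorem deriv_deriv_nonneg_of_isLocalMin {f : ℝ → ℝ} {x : ℝ} (h : IsLocalMin f x)
    (hc : ContinuousAt f x) : 0 ≤ deriv (deriv f) x := by
  by_contra! hneg
  -- by the second-derivative test `x` is also a local maximum, so `f` is constant near `x`
  have hconst : f =ᶠ[𝓝 x] fun _ => f x :=
    (h.and (isLocalMax_of_deriv_deriv_neg hneg h.deriv_eq_zero hc)).mono
      fun y hy => le_antisymm hy.2 hy.1
  have h0 := hconst.deriv.deriv_eq
  simp only [deriv_const', deriv_const] at h0
  exact hneg.ne h0

theorem IsLocalMin.fderiv_fderiv_apply_self_nonneg {L : E → ℝ} (hL : ContDiff ℝ 2 L) {a : E}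
    (h : IsLocalMin L a) (v : E) : 0 ≤ fderiv ℝ (fderiv ℝ L) a v v := by
  have hline : Continuous fun s : ℝ => a + s • v := by fun_prop
  have hderiv : deriv (fun s : ℝ => L (a + s • v)) = fun s => fderiv ℝ L (a + s • v) v :=
    funext fun s => (hasDerivAt_comp_add_smul (hL.differentiable (by norm_num) _)).deriv
  have hderiv2 : HasDerivAt (fun s : ℝ => fderiv ℝ L (a + s • v) v)
      (fderiv ℝ (fderiv ℝ L) a v v) 0 := by
    have hD := hasDerivAt_comp_add_smul (x := a) (v := v) (s := 0)
      ((hL.fderiv_right (m := 1) le_rfl).differentiable (by norm_num) _)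
    rw [zero_smul, add_zero] at hD
    exact (ContinuousLinearMap.apply ℝ ℝ v).hasFDerivAt.comp_hasDerivAt 0 hD
  have hmin : IsLocalMin (fun s : ℝ => L (a + s • v)) 0 :=
    IsLocalMin.comp_continuous (g := fun s : ℝ => a + s • v) (by simpa using h)
      hline.continuousAt
  have := deriv_deriv_nonneg_of_isLocalMin hmin (hL.continuous.comp hline).continuousAt
  rwa [hderiv, hderiv2.deriv] at this

end LineDerivatives

section Hessian

variable {E : Type*} [NormedAddCommGroup E] [InnerProductSpace ℝ E]

theorem ContinuousLinearMap.IsPositive.norm_one_sub_smul_le_one {A : E →L[ℝ] E}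
    (hA : A.IsPositive) {η : ℝ} (hη : 0 ≤ η) (hηA : η * ‖A‖ ≤ 2) : ‖1 - η • A‖ ≤ 1 := by
  have hsymm : ((1 : E →L[ℝ] E) - η • A : E →ₗ[ℝ] E).IsSymmetric := by
    simpa using LinearMap.IsSymmetric.one.sub (hA.isSymmetric.smul (c := η) rfl)
  rw [ContinuousLinearMap.norm_eq_iSup_rayleighQuotient _ hsymm]
  refine ciSup_le fun x => ?_
  have hAx : ⟪A x, x⟫ ≤ ‖A‖ * ‖x‖ ^ 2 := by
    calc ⟪A x, x⟫ ≤ ‖A x‖ * ‖x‖ := real_inner_le_norm _ _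
      _ ≤ ‖A‖ * ‖x‖ * ‖x‖ := by gcongr; exact A.le_opNorm x
      _ = ‖A‖ * ‖x‖ ^ 2 := by ring
  have hq : ((1 : E →L[ℝ] E) - η • A).reApplyInnerSelf x = ‖x‖ ^ 2 - η * ⟪A x, x⟫ := by
    simp [ContinuousLinearMap.reApplyInnerSelf, inner_sub_left, real_inner_smul_left]
  rw [ContinuousLinearMap.rayleighQuotient, hq, abs_div, abs_of_nonneg (sq_nonneg ‖x‖)]
  refine div_le_one_of_le₀ (abs_le.2 ⟨?_, ?_⟩) (sq_nonneg _)
  · nlinarith [mul_le_mul_of_nonneg_left hAx hη]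
  · nlinarith [mul_nonneg hη (hA.inner_nonneg_left x)]

variable [CompleteSpace E] {L : E → ℝ}

variable (E) in
/-- Over `ℝ` the Riesz isomorphism `toDual` is linear, not merely conjugate-linear. -/
def toDualReal : E ≃ₗᵢ[ℝ] StrongDual ℝ E := toDual ℝ E

theorem gradient_eq_toDualReal_symm_comp : ∇ L = (toDualReal E).symm ∘ fderiv ℝ L := rfl

theorem ContDiff.gradient {m n : WithTop ℕ∞} (hL : ContDiff ℝ n L) (hmn : m + 1 ≤ n) :
    ContDiff ℝ m (∇ L) := by
  rw [gradient_eq_toDualReal_symm_comp]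
  exact (toDualReal E).symm.contDiff.comp (hL.fderiv_right hmn)

theorem fderiv_gradient (x : E) :
    fderiv ℝ (∇ L) x =
      ((toDualReal E).symm : StrongDual ℝ E →L[ℝ] E).comp (fderiv ℝ (fderiv ℝ L) x) := by
  rw [gradient_eq_toDualReal_symm_comp, LinearIsometryEquiv.comp_fderiv]

theorem inner_fderiv_gradient_apply (x v w : E) :
    ⟪fderiv ℝ (∇ L) x v, w⟫ = fderiv ℝ (fderiv ℝ L) x v w := by
  rw [fderiv_gradient]
  exact toDual_symm_apply

theorem norm_fderiv_gradient_sub (x y : E) :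
    ‖fderiv ℝ (∇ L) x - fderiv ℝ (∇ L) y‖ =
      ‖fderiv ℝ (fderiv ℝ L) x - fderiv ℝ (fderiv ℝ L) y‖ := by
  rw [fderiv_gradient, fderiv_gradient, ← ContinuousLinearMap.comp_sub]
  exact LinearIsometry.norm_toContinuousLinearMap_comp (toDualReal E).symm.toLinearIsometry

theorem lipschitzWith_gradient {ρ : NNReal} (hL : ContDiff ℝ 2 L)
    (h2 : ∀ x, ‖fderiv ℝ (∇ L) x‖ ≤ ρ) : LipschitzWith ρ (∇ L) :=
  lipschitzWith_of_nnnorm_fderiv_le (𝕜 := ℝ)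
    ((hL.gradient (m := 1) le_rfl).differentiable (by norm_num)) fun x => by
      rw [← NNReal.coe_le_coe, coe_nnnorm]; exact h2 x

theorem lipschitzWith_fderiv_gradient {ρ : NNReal} (hL : ContDiff ℝ 3 L)
    (h3 : ∀ x, ‖iteratedFDeriv ℝ 3 L x‖ ≤ ρ) : LipschitzWith ρ (fderiv ℝ (∇ L)) := by
  have hD2 : LipschitzWith ρ (fderiv ℝ (fderiv ℝ L)) := by
    refine lipschitzWith_of_nnnorm_fderiv_le (𝕜 := ℝ) ?_ fun x => ?_
    · exact ((hL.fderiv_right (m := 2) le_rfl).fderiv_right (m := 1) le_rfl).differentiable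
        (by norm_num)
    · rw [← NNReal.coe_le_coe, coe_nnnorm, ← norm_iteratedFDeriv_zero (𝕜 := ℝ),
        norm_iteratedFDeriv_fderiv, norm_iteratedFDeriv_fderiv, norm_iteratedFDeriv_fderiv]
      exact h3 x
  refine LipschitzWith.of_dist_le_mul fun x y => ?_
  rw [dist_eq_norm, norm_fderiv_gradient_sub, ← dist_eq_norm (fderiv ℝ (fderiv ℝ L) x)]
  exact hD2.dist_le_mul x y

theorem IsLocalMin.isPositive_fderiv_gradient (hL : ContDiff ℝ 2 L) {a : E}
    (h : IsLocalMin L a) : (fderiv ℝ (∇ L) a).IsPositive := by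
  have hsymm : IsSymmSndFDerivAt ℝ L a := hL.contDiffAt.isSymmSndFDerivAt (by simp)
  refine ContinuousLinearMap.isPositive_def.2 ⟨fun v w => ?_, fun v => ?_⟩
  · change ⟪fderiv ℝ (∇ L) a v, w⟫ = ⟪v, fderiv ℝ (∇ L) a w⟫
    rw [real_inner_comm _ v, inner_fderiv_gradient_apply, inner_fderiv_gradient_apply, hsymm]
  · rw [ContinuousLinearMap.reApplyInnerSelf, RCLike.re_to_real, inner_fderiv_gradient_apply]
    exact h.fderiv_fderiv_apply_self_nonneg hL v

theorem IsLocalMin.norm_one_sub_smul_fderiv_gradient_le (hL : ContDiff ℝ 2 L) {a : E}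
    (h : IsLocalMin L a) {ρ₂ : ℝ} {ρ₃ : NNReal} (h2 : ‖fderiv ℝ (∇ L) a‖ ≤ ρ₂)
    (h3 : LipschitzWith ρ₃ (fderiv ℝ (∇ L))) {η : ℝ} (hη : 0 ≤ η) (hηρ : η * ρ₂ ≤ 2)
    (x : E) : ‖1 - η • fderiv ℝ (∇ L) x‖ ≤ 1 + η * ρ₃ * dist x a := by
  have hsplit : 1 - η • fderiv ℝ (∇ L) x =
      (1 - η • fderiv ℝ (∇ L) a) - η • (fderiv ℝ (∇ L) x - fderiv ℝ (∇ L) a) := by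
    rw [smul_sub]; abel
  have hcontr := (h.isPositive_fderiv_gradient hL).norm_one_sub_smul_le_one hη
    ((mul_le_mul_of_nonneg_left h2 hη).trans hηρ)
  rw [hsplit]
  refine (norm_sub_le _ _).trans ?_
  rw [norm_smul, Real.norm_of_nonneg hη, mul_assoc, ← dist_eq_norm (fderiv ℝ (∇ L) x)]
  exact add_le_add hcontr (mul_le_mul_of_nonneg_left (h3.dist_le_mul x a) hη)

end Hessian

section Descent

variable {E : Type*} [NormedAddCommGroup E] [InnerProductSpace ℝ E] [CompleteSpace E]
  {L : E → ℝ} {ρ : NNReal}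

theorem le_add_inner_gradient_add_sq (hL : Differentiable ℝ L)
    (hlip : LipschitzWith ρ (∇ L)) (x v : E) :
    L (x + v) ≤ L x + ⟪∇ L x, v⟫ + ρ / 2 * ‖v‖ ^ 2 := by
  set F : ℝ → ℝ := fun s => L (x + s • v) - s * ⟪∇ L x, v⟫ - ρ / 2 * s ^ 2 * ‖v‖ ^ 2
  have hF : ∀ s, HasDerivAt F (⟪∇ L (x + s • v), v⟫ - ⟪∇ L x, v⟫ - ρ * s * ‖v‖ ^ 2) s := by
    intro s
    have h := ((hasDerivAt_comp_add_smul (x := x) (v := v) (hL _)).fun_sub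
      ((hasDerivAt_id s).mul_const ⟪∇ L x, v⟫)).fun_sub
      (((hasDerivAt_pow 2 s).const_mul (ρ / 2 : ℝ)).mul_const (‖v‖ ^ 2))
    refine h.congr_deriv ?_
    rw [← inner_gradient_left]
    push_cast
    ring
  have hanti : AntitoneOn F (Set.Ici 0) := by
    refine antitoneOn_of_hasDerivWithinAt_nonpos (convex_Ici 0)
      (HasDerivAt.continuousOn fun s _ => hF s) (fun s _ => (hF s).hasDerivWithinAt)
      fun s hs => ?_
    rw [interior_Ici, Set.mem_Ioi] at hs
    have hmv : ‖∇ L (x + s • v) - ∇ L x‖ ≤ ρ * (s * ‖v‖) := by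
      simpa [norm_smul, abs_of_pos hs] using hlip.norm_sub_le (x + s • v) x
    have := real_inner_le_norm (∇ L (x + s • v) - ∇ L x) v
    rw [inner_sub_left] at this
    nlinarith [norm_nonneg v]
  have h10 : F 1 ≤ F 0 := hanti (Set.mem_Ici.2 le_rfl) (Set.mem_Ici.2 zero_le_one) zero_le_one
  simp only [F, one_smul, zero_smul, add_zero] at h10
  linarith

theorem apply_sub_smul_gradient_le (hL : Differentiable ℝ L) (hlip : LipschitzWith ρ (∇ L))
    {η : ℝ} (hη : 0 ≤ η) (hηρ : η * ρ ≤ 1) (x : E) :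
    L (x - η • ∇ L x) ≤ L x - η / 2 * ‖∇ L x‖ ^ 2 := by
  have h := le_add_inner_gradient_add_sq hL hlip x (-(η • ∇ L x))
  rw [← sub_eq_add_neg, inner_neg_right, real_inner_smul_right, real_inner_self_eq_norm_sq,
    norm_neg, norm_smul, Real.norm_of_nonneg hη] at h
  nlinarith [mul_nonneg hη (sq_nonneg ‖∇ L x‖)]

theorem sub_le_of_gradient_eq_zero (hL : Differentiable ℝ L) (hlip : LipschitzWith ρ (∇ L))
    {p : E} (hp : ∇ L p = 0) (x : E) : L x - L p ≤ ρ / 2 * dist x p ^ 2 := by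
  have := le_add_inner_gradient_add_sq hL hlip p (x - p)
  rw [add_sub_cancel, hp, inner_zero_left, ← dist_eq_norm] at this
  linarith

def IsPLOn (L : E → ℝ) (μ Lstar : ℝ) (U : Set E) : Prop :=
  ∀ θ ∈ U, Lstar ≤ L θ ∧ μ * (L θ - Lstar) ≤ 1 / 2 * ‖∇ L θ‖ ^ 2

theorem IsPLOn.sqrt_mul_sqrt_le_norm {μ Lstar : ℝ} {U : Set E} (h : IsPLOn L μ Lstar U)
    (hμ : 0 ≤ μ) {θ : E} (hθ : θ ∈ U) : √(2 * μ) * √(L θ - Lstar) ≤ ‖∇ L θ‖ := by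
  rw [← Real.sqrt_mul (by positivity), ← Real.sqrt_sq (norm_nonneg (∇ L θ))]
  exact Real.sqrt_le_sqrt (by linarith [(h θ hθ).2])

end Descent

theorem mul_mul_le_sqrt_sub_sqrt {s η g e e' : ℝ} (hs : 0 ≤ s) (hη : 0 ≤ η) (he' : 0 ≤ e')
    (hdesc : e' ≤ e - η / 2 * g ^ 2) (hpl : s * √e ≤ g) : s * (η * g) ≤ 4 * (√e - √e') := by
  have he : 0 ≤ e := by nlinarith [mul_nonneg hη (sq_nonneg g)]
  have hba : √e' ≤ √e := Real.sqrt_le_sqrt (by nlinarith [mul_nonneg hη (sq_nonneg g)])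
  have hg : 0 ≤ g := (mul_nonneg hs (Real.sqrt_nonneg e)).trans hpl
  rcases hg.eq_or_lt with rfl | hg
  · simp only [mul_zero]; linarith
  -- `η g² ≤ 2 (e - e') ≤ 4 √e (√e - √e')`
  have hsq : η * g ^ 2 ≤ 4 * √e * (√e - √e') := by
    nlinarith [Real.sq_sqrt he, Real.sq_sqrt he', Real.sqrt_nonneg e']
  refine le_of_mul_le_mul_right ?_ hg
  calc s * (η * g) * g = s * (η * g ^ 2) := by ring
    _ ≤ s * (4 * √e * (√e - √e')) := mul_le_mul_of_nonneg_left hsq hs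
    _ = 4 * (√e - √e') * (s * √e) := by ring
    _ ≤ 4 * (√e - √e') * g := mul_le_mul_of_nonneg_left hpl (by linarith)

theorem exists_tendsto_dist_le_of_dist_succ_le {α : Type*} [PseudoMetricSpace α]
    [CompleteSpace α] {u : ℕ → α} {f : ℕ → ℝ} (hf : ∀ n, 0 ≤ f n)
    (h : ∀ n, dist (u n) (u (n + 1)) ≤ f n - f (n + 1)) :
    ∃ a, Tendsto u atTop (𝓝 a) ∧ ∀ n, dist (u n) a ≤ f n := by
  have hstep : ∀ n, 0 ≤ f n - f (n + 1) := fun n => dist_nonneg.trans (h n)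
  have hsum : Summable fun n => f n - f (n + 1) :=
    summable_of_sum_range_le hstep fun n => by
      rw [Finset.sum_range_sub']; linarith [hf n]
  obtain ⟨a, ha⟩ := cauchySeq_tendsto_of_complete (cauchySeq_of_dist_le_of_summable _ h hsum)
  refine ⟨a, ha, fun n => (dist_le_tsum_of_dist_le_of_tendsto _ h hsum ha n).trans ?_⟩
  refine Real.tsum_le_of_sum_range_le (fun m => hstep (n + m)) fun m => ?_
  have := Finset.sum_range_sub' (fun m => f (n + m)) m
  simp only [add_zero, ← add_assoc] at this
  linarith [hf (n + m)]

section PLDescent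

variable {E : Type*} [NormedAddCommGroup E] [InnerProductSpace ℝ E] [CompleteSpace E]

/-- The condition `start` keeps the gradient-descent iterates `u` in `ball p R`: the remaining
path length from `u 0` is at most `4 / √(2μ) * √(L (u 0) - Lstar)`, and one step from `x` moves
by at most `η ρ * dist x p`. -/
structure PLDescent (L : E → ℝ) (ρ : NNReal) (μ η Lstar R : ℝ) (p : E) (u : ℕ → E) : Prop where
  differentiable : Differentiable ℝ L
  lipschitzWith : LipschitzWith ρ (∇ L)
  step_pos : 0 < η
  step_mul_le : η * ρ ≤ 1
  pl_pos : 0 < μ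
  gradient_center : ∇ L p = 0
  isPLOn : IsPLOn L μ Lstar (ball p R)
  gd : ∀ n, u (n + 1) = u n - η • ∇ L (u n)
  start : (1 + η * ρ) * (dist (u 0) p + 4 / √(2 * μ) * √(L (u 0) - Lstar)) < R

namespace PLDescent

variable {L : E → ℝ} {ρ : NNReal} {μ η Lstar R : ℝ} {p : E} {u : ℕ → E}
  (h : PLDescent L ρ μ η Lstar R p u)
include h

theorem dist_succ_eq (n : ℕ) : dist (u n) (u (n + 1)) = η * ‖∇ L (u n)‖ := by
  rw [dist_comm, dist_eq_norm, h.gd, sub_sub_cancel_left, norm_neg, norm_smul,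
    Real.norm_of_nonneg h.step_pos.le]

theorem sqrt_mul_dist_succ_le {n : ℕ} (hn : u n ∈ ball p R) (hn' : u (n + 1) ∈ ball p R) :
    √(2 * μ) * dist (u n) (u (n + 1)) ≤ 4 * (√(L (u n) - Lstar) - √(L (u (n + 1)) - Lstar)) := by
  rw [h.dist_succ_eq]
  refine mul_mul_le_sqrt_sub_sqrt (Real.sqrt_nonneg _) h.step_pos.le
    (sub_nonneg.2 (h.isPLOn _ hn').1) ?_ (h.isPLOn.sqrt_mul_sqrt_le_norm h.pl_pos.le hn)
  have := apply_sub_smul_gradient_le h.differentiable h.lipschitzWith h.step_pos.le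
    h.step_mul_le (u n)
  rw [h.gd]
  linarith

theorem start_lt : dist (u 0) p + 4 / √(2 * μ) * √(L (u 0) - Lstar) < R := by
  have hD : 0 ≤ dist (u 0) p + 4 / √(2 * μ) * √(L (u 0) - Lstar) := by positivity
  nlinarith [h.start, mul_nonneg (mul_nonneg h.step_pos.le ρ.coe_nonneg) hD]

theorem norm_gradient_le (x : E) : ‖∇ L x‖ ≤ ρ * dist x p := by
  simpa [h.gradient_center, dist_eq_norm] using h.lipschitzWith.norm_sub_le x p

theorem dist_succ_le_of_mem_ball {n : ℕ} (hn : u n ∈ ball p R) (hn' : u (n + 1) ∈ ball p R) :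
    dist (u n) (u (n + 1)) ≤
      4 / √(2 * μ) * (√(L (u n) - Lstar) - √(L (u (n + 1)) - Lstar)) := by
  rw [div_mul_eq_mul_div, le_div_iff₀ (Real.sqrt_pos.2 (by linarith [h.pl_pos])), mul_comm]
  exact h.sqrt_mul_dist_succ_le hn hn'

theorem mem_ball_and_dist_le (n : ℕ) :
    u n ∈ ball p R ∧
      dist (u 0) (u n) ≤ 4 / √(2 * μ) * (√(L (u 0) - Lstar) - √(L (u n) - Lstar)) := by
  induction n with
  | zero =>
    refine ⟨Metric.mem_ball.2 ((le_add_of_nonneg_right ?_).trans_lt h.start_lt), by simp⟩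
    positivity
  | succ n ih =>
    obtain ⟨hn, hdist⟩ := ih
    have hnp : dist (u n) p ≤ dist (u 0) p + 4 / √(2 * μ) * √(L (u 0) - Lstar) := by
      have : 0 ≤ 4 / √(2 * μ) * √(L (u n) - Lstar) := by positivity
      linarith [dist_triangle_left (u n) p (u 0)]
    have hn' : u (n + 1) ∈ ball p R := by
      rw [Metric.mem_ball]
      calc dist (u (n + 1)) p ≤ dist (u n) (u (n + 1)) + dist (u n) p := dist_triangle_left ..
        _ ≤ η * (ρ * dist (u n) p) + dist (u n) p := by
          rw [h.dist_succ_eq]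
          gcongr
          exacts [h.step_pos.le, h.norm_gradient_le _]
        _ = (1 + η * ρ) * dist (u n) p := by ring
        _ ≤ (1 + η * ρ) * (dist (u 0) p + 4 / √(2 * μ) * √(L (u 0) - Lstar)) := by
          gcongr; linarith [mul_nonneg h.step_pos.le ρ.coe_nonneg]
        _ < R := h.start
    refine ⟨hn', ?_⟩
    have := h.dist_succ_le_of_mem_ball hn hn'
    linarith [dist_triangle (u 0) (u n) (u (n + 1))]

theorem mem_ball (n : ℕ) : u n ∈ ball p R := (h.mem_ball_and_dist_le n).1

theorem dist_succ_le (n : ℕ) : dist (u n) (u (n + 1)) ≤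
    4 / √(2 * μ) * (√(L (u n) - Lstar) - √(L (u (n + 1)) - Lstar)) :=
  h.dist_succ_le_of_mem_ball (h.mem_ball n) (h.mem_ball (n + 1))

theorem mul_mul_sqrt_le (n : ℕ) :
    μ * (η * √(L (u n) - Lstar)) ≤ 2 * (√(L (u n) - Lstar) - √(L (u (n + 1)) - Lstar)) := by
  have hs : √(2 * μ) ^ 2 = 2 * μ := Real.sq_sqrt (by linarith [h.pl_pos])
  have hpl := h.isPLOn.sqrt_mul_sqrt_le_norm h.pl_pos.le (h.mem_ball n)
  have hstep := h.sqrt_mul_dist_succ_le (h.mem_ball n) (h.mem_ball (n + 1))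
  rw [h.dist_succ_eq] at hstep
  have := mul_le_mul_of_nonneg_left hpl (mul_nonneg (Real.sqrt_nonneg (2 * μ)) h.step_pos.le)
  have hsq : √(2 * μ) * η * (√(2 * μ) * √(L (u n) - Lstar)) =
      2 * μ * (η * √(L (u n) - Lstar)) := by
    linear_combination (η * √(L (u n) - Lstar)) * hs
  linarith

theorem sum_mul_sqrt_le (s : Finset ℕ) :
    ∑ l ∈ s, η * √(L (u l) - Lstar) ≤ 2 / μ * √(L (u 0) - Lstar) := by
  obtain ⟨N, hN⟩ := s.exists_nat_subset_range
  have hterm : ∀ l, η * √(L (u l) - Lstar) ≤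
      2 / μ * √(L (u l) - Lstar) - 2 / μ * √(L (u (l + 1)) - Lstar) := fun l => by
    rw [← mul_sub, div_mul_eq_mul_div, le_div_iff₀ h.pl_pos, mul_comm]
    exact h.mul_mul_sqrt_le l
  calc ∑ l ∈ s, η * √(L (u l) - Lstar)
      ≤ ∑ l ∈ Finset.range N, η * √(L (u l) - Lstar) :=
        Finset.sum_le_sum_of_subset_of_nonneg hN fun l _ _ =>
          mul_nonneg h.step_pos.le (Real.sqrt_nonneg _)
    _ ≤ ∑ l ∈ Finset.range N,
        (2 / μ * √(L (u l) - Lstar) - 2 / μ * √(L (u (l + 1)) - Lstar)) :=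
        Finset.sum_le_sum fun l _ => hterm l
    _ ≤ 2 / μ * √(L (u 0) - Lstar) := by
        rw [Finset.sum_range_sub' (fun l => 2 / μ * √(L (u l) - Lstar))]
        have : 0 ≤ 2 / μ * √(L (u N) - Lstar) := by have := h.pl_pos; positivity
        linarith

theorem gradient_eq_zero_of_tendsto {a : E} (ha : Tendsto u atTop (𝓝 a)) : ∇ L a = 0 := by
  have h1 : Tendsto (fun n => η • ∇ L (u n)) atTop (𝓝 (η • ∇ L a)) :=
    ((h.lipschitzWith.continuous.tendsto a).comp ha).const_smul η
  have h2 : Tendsto (fun n => η • ∇ L (u n)) atTop (𝓝 0) := by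
    have := ha.sub (ha.comp (tendsto_add_atTop_nat 1))
    rw [sub_self] at this
    refine this.congr fun n => ?_
    simp [h.gd]
  exact (smul_eq_zero.1 (tendsto_nhds_unique h1 h2)).resolve_left h.step_pos.ne'

theorem exists_isLocalMin : ∃ a, IsLocalMin L a ∧
    ∀ n, dist (u n) a ≤ 4 / √(2 * μ) * √(L (u n) - Lstar) := by
  obtain ⟨a, ha, hdist⟩ := exists_tendsto_dist_le_of_dist_succ_le
    (f := fun n => 4 / √(2 * μ) * √(L (u n) - Lstar)) (fun n => by positivity)
    fun n => by rw [← mul_sub]; exact h.dist_succ_le n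
  have ha_mem : a ∈ ball p R := by
    rw [Metric.mem_ball]
    linarith [dist_triangle_left a p (u 0), hdist 0, h.start_lt]
  obtain ⟨hlow, hpl⟩ := h.isPLOn a ha_mem
  rw [h.gradient_eq_zero_of_tendsto ha, norm_zero] at hpl
  have hLa : L a = Lstar := by nlinarith [h.pl_pos]
  refine ⟨a, Filter.eventually_of_mem (isOpen_ball.mem_nhds ha_mem) fun θ hθ => ?_, hdist⟩
  exact hLa ▸ (h.isPLOn θ hθ).1

end PLDescent

end PLDescent

theorem PLDescent.norm_clmProd_le {d : ℕ} {L : EuclideanSpace ℝ (Fin d) → ℝ} {ρ : NNReal}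
    {μ η Lstar R : ℝ} {p : EuclideanSpace ℝ (Fin d)} {u : ℕ → EuclideanSpace ℝ (Fin d)}
    (h : PLDescent L ρ μ η Lstar R p u) (hL : ContDiff ℝ 3 L) {ρ₃ : ℝ}
    (h3 : ∀ θ, ‖iteratedFDeriv ℝ 3 L θ‖ ≤ ρ₃) {m n : ℕ} (hmn : m ≤ n) :
    ‖clmProd (fun l => 1 - η • fderiv ℝ (∇ L) (u l)) m n‖ ≤
      Real.exp (2 * ρ₃ / μ * (4 / √(2 * μ) * √(L (u 0) - Lstar))) := by
  have hρ₃ : 0 ≤ ρ₃ := (norm_nonneg _).trans (h3 0)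
  set K := 4 / √(2 * μ)
  obtain ⟨a, hmin, hdist⟩ := h.exists_isLocalMin
  have hfac : ∀ l, ‖1 - η • fderiv ℝ (∇ L) (u l)‖ ≤
      Real.exp (η * ρ₃ * (K * √(L (u l) - Lstar))) := fun l => by
    have := hmin.norm_one_sub_smul_fderiv_gradient_le (hL.of_le (by norm_num))
      (norm_fderiv_le_of_lipschitz ℝ h.lipschitzWith)
      (lipschitzWith_fderiv_gradient hL fun θ => (h3 θ).trans (Real.le_coe_toNNReal ρ₃))
      h.step_pos.le (by linarith [h.step_mul_le]) (u l)
    rw [Real.coe_toNNReal _ hρ₃] at this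
    calc _ ≤ 1 + η * ρ₃ * dist (u l) a := this
      _ ≤ η * ρ₃ * (K * √(L (u l) - Lstar)) + 1 := by
        rw [add_comm]; gcongr; exacts [mul_nonneg h.step_pos.le hρ₃, hdist l]
      _ ≤ _ := Real.add_one_le_exp _
  refine (norm_clmProd_le_exp_sum _ hmn hfac).trans (Real.exp_le_exp.2 ?_)
  calc ∑ l ∈ Finset.Ico m n, η * ρ₃ * (K * √(L (u l) - Lstar))
      = ρ₃ * K * ∑ l ∈ Finset.Ico m n, η * √(L (u l) - Lstar) := by
        rw [Finset.mul_sum]; congr 1; ext l; ring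
    _ ≤ ρ₃ * K * (2 / μ * √(L (u 0) - Lstar)) := by
        gcongr; exact h.sum_mul_sqrt_le _
    _ = 2 * ρ₃ / μ * (K * √(L (u 0) - Lstar)) := by ring

theorem four_div_sqrt_mul_sqrt_le {μ ρ e δ : ℝ} (hμ : 0 < μ) (hρ : 0 ≤ ρ) (hδ : 0 ≤ δ)
    (he : e ≤ ρ / 2 * δ ^ 2) : 4 / √(2 * μ) * √e ≤ 2 * √(ρ / μ) * δ := by
  refine (mul_le_mul_of_nonneg_left (Real.sqrt_le_sqrt he) (by positivity)).trans ?_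
  refine (pow_le_pow_iff_left₀ (by positivity) (by positivity) two_ne_zero).1 (le_of_eq ?_)
  rw [mul_pow, mul_pow, mul_pow, div_pow, Real.sq_sqrt (by positivity),
    Real.sq_sqrt (by positivity), Real.sq_sqrt (by positivity)]
  field_simp
  ring

theorem two_mul_sqrt_div_mul_le {ρ μ a b : ℝ} (hρ : 0 < ρ) (hμ : 0 < μ)
    (h : a ≤ 1 / 4 * √(μ / ρ) * b) : 2 * √(ρ / μ) * a ≤ b / 2 := by
  have hone : √(ρ / μ) * √(μ / ρ) = 1 := by
    rw [← Real.sqrt_mul (by positivity), div_mul_div_comm, mul_comm ρ,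
      div_self (by positivity), Real.sqrt_one]
  calc 2 * √(ρ / μ) * a ≤ 2 * √(ρ / μ) * (1 / 4 * √(μ / ρ) * b) := by gcongr
    _ = b / 2 * (√(ρ / μ) * √(μ / ρ)) := by ring
    _ = b / 2 := by rw [hone, mul_one]

/-- Uniform bound on products of gradient-descent linearization matrices.
There exist constants `C, η₀ > 0`, depending only on `μ, ρ₂, ρ₃, ε₀` (and in particular
independent of `η` and `H`, hence of `α = Hη`), such that: for any `C³` function
`L : ℝ^d → ℝ` with `‖∇²L‖ ≤ ρ₂` and `‖∇³L‖ ≤ ρ₃` globally, any minimizer set `S`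
satisfying the minimizer-set assumption with radii `ε₀ < ε₁ < ε₂ < ε₃`, any step size
`0 < η ≤ min(η₀, 1/ρ₂)`, and any gradient-descent iterates `ũ` with `dist(ũ₀, S) < ε₀`,
one has `‖∏_{l=τ+1}^{t−1}(I − η∇²L(ũ_l))‖ ≤ C` for all `0 ≤ τ < t ≤ H`. -/
theorem statement19 (μpl ρ₂ ρ₃ ε₀ : ℝ) (hμpl : 0 < μpl) (hε₀ : 0 < ε₀) :
    ∃ C > 0, ∃ η₀ > 0,
      ∀ (d : ℕ) (L : EuclideanSpace ℝ (Fin d) → ℝ), ContDiff ℝ 3 L →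
      (∀ θ, ‖fderiv ℝ (gradient L) θ‖ ≤ ρ₂) →
      (∀ θ, ‖iteratedFDeriv ℝ 3 L θ‖ ≤ ρ₃) →
      ∀ (Lstar : ℝ) (S : Set (EuclideanSpace ℝ (Fin d))) (ε₁ ε₂ ε₃ : ℝ),
      S.Nonempty → IsCompact S →
      (∀ θ ∈ S, gradient L θ = 0) → (∀ θ ∈ S, L θ = Lstar) →
      (∀ θ, Metric.infDist θ S < ε₃ → Lstar ≤ L θ) →
      (∀ θ, Metric.infDist θ S < ε₃ →
        μpl * (L θ - Lstar) ≤ (1 / 2) * ‖gradient L θ‖ ^ 2) →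
      (S = {θ | Metric.infDist θ S < ε₃ ∧ L θ = Lstar}) →
      ε₀ < ε₁ → ε₁ < ε₂ → ε₂ < ε₃ →
      ε₀ ≤ 1 / 4 * Real.sqrt (μpl / ρ₂) * ε₁ → ε₁ ≤ ε₂ / 2 →
      ε₂ ≤ Real.sqrt (μpl / ρ₂) * ε₃ →
      ∀ η : ℝ, 0 < η → η ≤ η₀ → η ≤ 1 / ρ₂ →
      ∀ (H : ℕ) (ut : ℕ → EuclideanSpace ℝ (Fin d)),
      (∀ t, ut (t + 1) = ut t - η • gradient L (ut t)) →
      Metric.infDist (ut 0) S < ε₀ →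
      ∀ τ t : ℕ, τ < t → t ≤ H →
        ‖clmProd (fun l =>
            (1 : EuclideanSpace ℝ (Fin d) →L[ℝ] EuclideanSpace ℝ (Fin d)) -
              η • fderiv ℝ (gradient L) (ut l)) (τ + 1) t‖ ≤ C := by
  refine ⟨Real.exp (2 * ρ₃ / μpl * (2 * √(ρ₂ / μpl) * ε₀)), Real.exp_pos _,
    1 / (3 * max ρ₂ 1), by positivity, ?_⟩
  intro d L hL h2 h3 Lstar S ε₁ ε₂ ε₃ hS _ hSgrad hSval hSlow hSpl _ h01 h12 h23 hε₀₁ hε₁₂ _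
    η hη hηη₀ hηρ₂ H u hu hu0 τ t hτt _
  have hρ₂ : 0 < ρ₂ := by
    by_contra! h
    exact hη.not_ge (hηρ₂.trans (div_nonpos_of_nonneg_of_nonpos zero_le_one h))
  have hηρ : η * ρ₂ ≤ 1 / 3 := by
    rw [le_div_iff₀ (by positivity)] at hηη₀
    nlinarith [le_max_left ρ₂ 1]
  have hρ : (ρ₂.toNNReal : ℝ) = ρ₂ := Real.coe_toNNReal _ hρ₂.le
  have hlip := lipschitzWith_gradient (ρ := ρ₂.toNNReal) (hL.of_le (by norm_num))
    fun θ => (h2 θ).trans_eq hρ.symm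
  have hLd : Differentiable ℝ L := hL.differentiable (by norm_num)
  obtain ⟨p, hpS, hup⟩ := (infDist_lt_iff hS).1 hu0
  have hK : 4 / √(2 * μpl) * √(L (u 0) - Lstar) ≤ 2 * √(ρ₂ / μpl) * ε₀ := by
    have := sub_le_of_gradient_eq_zero hLd hlip (hSgrad p hpS) (u 0)
    rw [hSval p hpS, hρ] at this
    exact four_div_sqrt_mul_sqrt_le hμpl hρ₂.le hε₀.le (this.trans (by gcongr))
  have hKε := two_mul_sqrt_div_mul_le hρ₂ hμpl hε₀₁
  have hD : PLDescent L ρ₂.toNNReal μpl η Lstar ε₃ p u :=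
    { differentiable := hLd
      lipschitzWith := hlip
      step_pos := hη
      step_mul_le := by rw [hρ]; linarith
      pl_pos := hμpl
      gradient_center := hSgrad p hpS
      isPLOn := fun θ hθ =>
        have hθS : infDist θ S < ε₃ := (infDist_le_dist_of_mem hpS).trans_lt hθ
        ⟨hSlow θ hθS, hSpl θ hθS⟩
      gd := hu
      start := by
        -- `dist (u 0) p + … < ε₀ + ε₁ / 2 < 3 ε₂ / 4` and `1 + η ρ₂ ≤ 4 / 3`
        have hX : 0 ≤ dist (u 0) p + 4 / √(2 * μpl) * √(L (u 0) - Lstar) := by positivity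
        rw [hρ]
        nlinarith [mul_le_mul_of_nonneg_right hηρ hX] }
  refine (hD.norm_clmProd_le hL h3 hτt).trans (Real.exp_le_exp.2 ?_)
  have hρ₃ : 0 ≤ ρ₃ := (norm_nonneg _).trans (h3 0)
  gcongr
end
end
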